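/- A subset ℛ of 𝒢 is a partial Z-regulus (i.e. satisfies conditions (R1) and (R2)) if, and only if, it satisfies: (⊠1) ℛ is a distant clique with at least three elements, and (⊠2) whenever three mutually distinct elements E₀, E₁, E₂ ∈ ℛ and some W ∈ 𝒢 satisfy W ∼ E₀, W not distant from E₁ and W not distant from E₂, then W is not distant from any E ∈ ℛ. -/

import Mathlib

/-- The Grassmannian `𝒢` of all subspaces `X ≤ V` with `X ≅ V/X`. -/
def Grass (K V : Type*) [DivisionRing K] [AddCommGroup V] [Module K V] :
    Set (Submodule K V) :=
  {X | Nonempty (X ≃ₗ[K] (V ⧸ X))}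

variable {K V : Type*} [DivisionRing K] [AddCommGroup V] [Module K V]

/-- The dimension of the quotient `E / M` (computed as the rank of `E ⧸ (M ∩ E)`). -/
noncomputable def quotRank (M E : Submodule K V) : Cardinal :=
  Module.rank K (E ⧸ (M.comap E.subtype))

/-- Two subspaces are adjacent if `dim (X/(X ⊓ Y)) = dim (Y/(X ⊓ Y)) = 1`. -/
def Adjacent (X Y : Submodule K V) : Prop :=
  quotRank (X ⊓ Y) X = 1 ∧ quotRank (X ⊓ Y) Y = 1

/-- Two subspaces are distant if they are complementary: `X ⊕ Y = V`. -/
def Distant (X Y : Submodule K V) : Prop := IsCompl X Y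

/-- The star `𝒢[M⟩` with centre `M`. -/
def starSet (M : Submodule K V) : Set (Submodule K V) :=
  {E | M ≤ E ∧ quotRank M E = 1}

/-- `M` is the centre of a star, i.e. there is `X ∈ 𝒢` with `M ≤ X`, `dim (X/M) = 1`. -/
def IsStarCentre (M : Submodule K V) : Prop :=
  ∃ X ∈ Grass K V, M ≤ X ∧ quotRank M X = 1

/-- The top `𝒢⟨N]` with carrier `N`. -/
def topSet (N : Submodule K V) : Set (Submodule K V) :=
  {E | E ≤ N ∧ quotRank E N = 1}

/-- `N` is the carrier of a top, i.e. there is `X ∈ 𝒢` with `X ≤ N`, `dim (N/X) = 1`. -/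
def IsTopCarrier (N : Submodule K V) : Prop :=
  ∃ X ∈ Grass K V, X ≤ N ∧ quotRank X N = 1

/-- An adjacency clique: a set of mutually adjacent elements of `𝒢`. -/
def IsAdjClique (A : Set (Submodule K V)) : Prop :=
  A ⊆ Grass K V ∧ A.Pairwise Adjacent

/-- A maximal adjacency clique. -/
def IsMaxAdjClique (A : Set (Submodule K V)) : Prop :=
  IsAdjClique A ∧ ∀ B, IsAdjClique B → A ⊆ B → A = B

/-- The pencil `𝒢[M,N] = {X ∈ 𝒢 | M < X < N}`. -/
def pencilSet (M N : Submodule K V) : Set (Submodule K V) :=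
  {X ∈ Grass K V | M < X ∧ X < N}

/-- `(M, N)` defines a pencil: there is `X ∈ 𝒢` with `M ≤ X ≤ N` and
`dim (X/M) = dim (N/X) = 1`. -/
def IsPencilPair (M N : Submodule K V) : Prop :=
  ∃ X ∈ Grass K V, M ≤ X ∧ X ≤ N ∧ quotRank M X = 1 ∧ quotRank X N = 1

/-- A pencil in `𝒢`. -/
def IsPencil (S : Set (Submodule K V)) : Prop :=
  ∃ M N : Submodule K V, IsPencilPair M N ∧ S = pencilSet M N

/-- A point is a one-dimensional subspace. -/
def IsPoint (p : Submodule K V) : Prop := Module.rank K p = 1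

/-- A line is a two-dimensional subspace. -/
def IsLine (L : Submodule K V) : Prop := Module.rank K L = 2

/-- Two subspaces meet if they have a common point, i.e. nonzero intersection. -/
def Meets (X Y : Submodule K V) : Prop := X ⊓ Y ≠ ⊥

/-- A distant clique: a set of mutually distant elements of `𝒢`. -/
def IsDistantClique (R : Set (Submodule K V)) : Prop :=
  R ⊆ Grass K V ∧ R.Pairwise Distant

/-- A set has at least three elements. -/
def HasThree (R : Set (Submodule K V)) : Prop :=
  ∃ A ∈ R, ∃ B ∈ R, ∃ C ∈ R, A ≠ B ∧ A ≠ C ∧ B ≠ C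

/-- Condition (R2): if a line meets three mutually distinct elements of `R`
then it meets all elements of `R`. -/
def MeetsThreeMeetsAll (R : Set (Submodule K V)) : Prop :=
  ∀ L : Submodule K V, IsLine L →
    ∀ E₀ ∈ R, ∀ E₁ ∈ R, ∀ E₂ ∈ R, E₀ ≠ E₁ → E₀ ≠ E₂ → E₁ ≠ E₂ →
      Meets L E₀ → Meets L E₁ → Meets L E₂ → ∀ E ∈ R, Meets L E

/-- A partial `Z`-regulus: conditions (R1) and (R2). -/
def IsPartialZRegulus (R : Set (Submodule K V)) : Prop :=
  (IsDistantClique R ∧ HasThree R) ∧ MeetsThreeMeetsAll R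

/-- A `Z`-regulus: a partial `Z`-regulus that is maximal, i.e. not properly
contained in any partial `Z`-regulus. -/
def IsZRegulus (R : Set (Submodule K V)) : Prop :=
  IsPartialZRegulus R ∧ ∀ S : Set (Submodule K V), IsPartialZRegulus S → R ⊆ S → R = S

/-- A directrix of `R`: a line meeting all elements of `R`. -/
def IsDirectrix (R : Set (Submodule K V)) (L : Submodule K V) : Prop :=
  IsLine L ∧ ∀ E ∈ R, Meets L E

/-- Condition (⊠2) from Theorem `Zreg`. -/
def BoxTwo (R : Set (Submodule K V)) : Prop :=
  ∀ E₀ ∈ R, ∀ E₁ ∈ R, ∀ E₂ ∈ R, E₀ ≠ E₁ → E₀ ≠ E₂ → E₁ ≠ E₂ →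
    ∀ W ∈ Grass K V, Adjacent W E₀ → ¬ Distant W E₁ → ¬ Distant W E₂ →
      ∀ E ∈ R, ¬ Distant W E

/-!
If `E₀ ⊕ E = V` and `W` is adjacent to `E₀`, then `H := W ∩ E₀` is a hyperplane of `E₀`, so
`H + E` is a hyperplane of `V`. Hence `W` is complementary to `E` exactly when `W ⊄ H + E`, and
already as soon as `W ∩ E = 0`: in (⊠2), "not distant from `Eᵢ`" just means "meets `Eᵢ`".

(R2) ⇒ (⊠2): if `W` meets `E₁` and `E₂` in `e₁` and `e₂`, the line `⟨e₁, e₂⟩ ⊆ W` meets the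
hyperplane `H` of `W`, hence `E₀`; by (R2) it meets every `E ∈ ℛ`, and so does `W`.

(⊠2) ⇒ (R2): let the line `L` meet `E₀`, `E₁`, `E₂` in `v₀`, `v₁`, `v₂`, so `L = ⟨v₀, v₁⟩`, and
write `v₁ = x + e` along `E₀ ⊕ E`. If `x ∈ K v₀` then `e ∈ L ∩ E`. Otherwise pick a hyperplane
`H` of `E₀` through `v₀` missing `x`: then `W := H + K v₁` is adjacent to `E₀`, hence in `𝒢`,
and contains `L`, so (⊠2) forces `W ⊆ H + E`, whence `x ∈ (H + E) ∩ E₀ = H`, a contradiction.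

Adjacency preserves `𝒢` in any dimension: if `X ∩ Y` is a hyperplane of both `X = (X ∩ Y) ⊕ K x`
and `Y = (X ∩ Y) ⊕ K y`, then `dim X = dim Y`, and `V/X ≅ K y ⊕ C ≅ K x ⊕ C ≅ V/Y` for any
complement `C` of `X + Y`.
-/

open Submodule

section ModularLattice

variable {α : Type*} [Lattice α] [BoundedOrder α] [IsModularLattice α] {A B H W : α}

theorem IsCompl.sup_covBy_top_of_covBy (hc : IsCompl A B) (hH : H ⋖ A) : H ⊔ B ⋖ ⊤ := by
  have hinf : A ⊓ (H ⊔ B) = H := by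
    rw [inf_comm, sup_inf_assoc_of_le B hH.le, inf_comm, hc.inf_eq_bot, sup_bot_eq]
  have := covBy_sup_of_inf_covBy_left (a := A) (b := H ⊔ B) (by rwa [hinf])
  rwa [← sup_assoc, sup_eq_left.2 hH.le, hc.sup_eq_top] at this

theorem IsCompl.isCompl_iff_not_le_sup (hc : IsCompl A B) (hH : H ⋖ A) (hW : H ⋖ W) :
    IsCompl W B ↔ ¬ W ≤ H ⊔ B := by
  have htop := hc.sup_covBy_top_of_covBy hH
  refine ⟨fun hWB hle => htop.ne ?_, fun hle => ⟨?_, ?_⟩⟩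
  · exact top_le_iff.1 (hWB.sup_eq_top ▸ sup_le hle le_sup_right)
  · have hWH : W ⊓ (H ⊔ B) = H :=
      (hW.eq_or_eq (le_inf hW.le le_sup_left) inf_le_left).resolve_right
        fun h => hle (h ▸ inf_le_right)
    rw [disjoint_iff, eq_bot_iff, ← hc.inf_eq_bot]
    exact le_inf ((inf_le_inf_left W le_sup_right).trans (hWH.le.trans hH.le)) inf_le_right
  · rw [codisjoint_iff]
    exact (htop.eq_or_eq (sup_le_sup_right hW.le B) le_top).resolve_left
      fun h => hle (h ▸ le_sup_left)

theorem IsCompl.isCompl_iff_disjoint (hc : IsCompl A B) (hH : H ⋖ A) (hW : H ⋖ W) :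
    IsCompl W B ↔ Disjoint W B := by
  refine ⟨IsCompl.disjoint, fun hd => (hc.isCompl_iff_not_le_sup hH hW).2 fun hle => hW.ne ?_⟩
  rw [← inf_eq_left.2 hle, inf_comm, sup_inf_assoc_of_le B hW.le, inf_comm, hd.eq_bot,
    sup_bot_eq]

end ModularLattice

section Subspaces

variable {M E H L S W X Y : Submodule K V}

theorem quotRank_eq_one_iff_covBy (h : M ≤ E) : quotRank M E = 1 ↔ M ⋖ E := by
  rw [covBy_iff_quot_is_simple h, isSimpleModule_iff_finrank_eq_one, quotRank,
    Module.rank_eq_one_iff_finrank_eq_one]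

theorem adjacent_iff_covBy : Adjacent X Y ↔ X ⊓ Y ⋖ X ∧ X ⊓ Y ⋖ Y := by
  rw [Adjacent, quotRank_eq_one_iff_covBy inf_le_left, quotRank_eq_one_iff_covBy inf_le_right]

theorem rank_span_singleton_eq_one {v : V} (hv : v ≠ 0) : Module.rank K (K ∙ v) = 1 :=
  Module.rank_eq_one_iff_finrank_eq_one.2 (finrank_span_singleton hv)

theorem rank_sup_eq_add_of_disjoint (h : Disjoint X Y) :
    Module.rank K ↥(X ⊔ Y) = Module.rank K X + Module.rank K Y := by
  rw [← rank_sup_add_rank_inf_eq, h.eq_bot, rank_bot, add_zero]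

theorem CovBy.exists_span_singleton_sup_eq (h : M ⋖ E) : ∃ v ∉ M, (K ∙ v) ⊔ M = E := by
  obtain ⟨v, hvE, hvM⟩ := SetLike.exists_of_lt h.lt
  refine ⟨v, hvM, (h.eq_or_eq le_sup_right ?_).resolve_left (covBy_span_singleton_sup hvM).lt.ne'⟩
  exact sup_le ((span_singleton_le_iff_mem v E).2 hvE) h.le

theorem CovBy.rank_eq_add_one (h : M ⋖ E) : Module.rank K E = Module.rank K M + 1 := by
  obtain ⟨v, hvM, rfl⟩ := h.exists_span_singleton_sup_eq
  have hv : v ≠ 0 := fun h0 => hvM (h0 ▸ zero_mem M)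
  rw [sup_comm, rank_sup_eq_add_of_disjoint ((disjoint_span_singleton' hv).2 hvM),
    rank_span_singleton_eq_one hv]

theorem rank_quotient_eq_one_add_of_isCompl (hY : X ⊓ Y ⋖ Y) {C : Submodule K V}
    (hC : IsCompl (X ⊔ Y) C) : Module.rank K (V ⧸ X) = 1 + Module.rank K C := by
  obtain ⟨y, hyXY, hyY⟩ := hY.exists_span_singleton_sup_eq
  have hyX : y ∉ X := fun hyX => hyXY ⟨hyX, hyY ▸ mem_sup_left (mem_span_singleton_self y)⟩
  have hy : y ≠ 0 := fun h0 => hyX (h0 ▸ zero_mem X)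
  rw [← hyY, sup_left_comm, sup_inf_self, sup_comm] at hC
  have hcompl := ((disjoint_span_singleton' hy).2 hyX).isCompl_sup_right_of_isCompl_sup_left hC
  rw [(quotientEquivOfIsCompl X _ hcompl).rank_eq,
    rank_sup_eq_add_of_disjoint (hC.disjoint.mono_left le_sup_right), rank_span_singleton_eq_one hy]

theorem Adjacent.mem_grass_iff (h : Adjacent X Y) : X ∈ Grass K V ↔ Y ∈ Grass K V := by
  rw [adjacent_iff_covBy] at h
  have hrank : Module.rank K X = Module.rank K Y := by
    rw [h.1.rank_eq_add_one, h.2.rank_eq_add_one]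
  obtain ⟨C, hC⟩ := (X ⊔ Y).exists_isCompl
  have hrank_quotient : Module.rank K (V ⧸ X) = Module.rank K (V ⧸ Y) := by
    rw [rank_quotient_eq_one_add_of_isCompl h.2 hC,
      rank_quotient_eq_one_add_of_isCompl (inf_comm X Y ▸ h.1) (sup_comm X Y ▸ hC)]
  simp only [Grass, Set.mem_ofPred_eq, Module.nonempty_linearEquiv_iff_rank_eq, hrank,
    hrank_quotient]

theorem meets_of_mem {v : V} (hX : v ∈ X) (hY : v ∈ Y) (hv : v ≠ 0) : Meets X Y :=
  (Submodule.ne_bot_iff _).2 ⟨v, ⟨hX, hY⟩, hv⟩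

theorem Meets.mono {X' Y' : Submodule K V} (h : Meets X Y) (hX : X ≤ X') (hY : Y ≤ Y') :
    Meets X' Y' :=
  ne_bot_of_le_ne_bot h (inf_le_inf hX hY)

theorem Meets.not_distant (h : Meets X Y) : ¬ Distant X Y :=
  fun hd => h hd.inf_eq_bot

theorem Distant.eq_zero_of_mem {v : V} (h : Distant X Y) (hX : v ∈ X) (hY : v ∈ Y) : v = 0 :=
  disjoint_def.1 h.disjoint v hX hY

theorem Distant.not_distant_iff_meets_of_adjacent (hc : Distant X Y) (hW : Adjacent W X) :
    ¬ Distant W Y ↔ Meets W Y := by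
  rw [adjacent_iff_covBy] at hW
  rw [Distant, hc.isCompl_iff_disjoint hW.2 hW.1, disjoint_iff]
  rfl

theorem isLine_span_sup_span {u v : V} (hu : u ≠ 0) (hv : v ≠ 0)
    (h : Disjoint (K ∙ u) (K ∙ v)) : IsLine ((K ∙ u) ⊔ (K ∙ v)) := by
  rw [IsLine, rank_sup_eq_add_of_disjoint h, rank_span_singleton_eq_one hu,
    rank_span_singleton_eq_one hv, one_add_one_eq_two]

theorem IsLine.ne_bot (hL : IsLine L) : L ≠ ⊥ := by
  rintro rfl
  simp [IsLine] at hL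

theorem IsLine.eq_of_le {P : Submodule K V} (hL : IsLine L) (hP : IsLine P) (h : P ≤ L) :
    P = L := by
  have : FiniteDimensional K L := Module.rank_lt_aleph0_iff.1 (hL ▸ Cardinal.natCast_lt_aleph0)
  exact eq_of_le_of_finrank_eq h
    ((Module.finrank_eq_of_rank_eq hP).trans (Module.finrank_eq_of_rank_eq hL).symm)

theorem IsLine.meets_of_le_of_covBy (hL : IsLine L) (hLW : L ≤ W) (hH : H ⋖ W) : Meets L H := by
  intro hLH
  rcases hH.eq_or_eq (le_sup_left : H ≤ H ⊔ L) (sup_le hH.le hLW) with hHL | hHL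
  · exact hL.ne_bot ((inf_eq_left.2 (sup_eq_left.1 hHL)).symm.trans hLH)
  · have hcov := inf_covBy_of_covBy_sup_left (hHL ▸ hH : H ⋖ H ⊔ L)
    rw [inf_comm, hLH] at hcov
    have hrank := hcov.rank_eq_add_one
    rw [rank_bot, zero_add, hL] at hrank
    norm_num at hrank

theorem exists_covBy_of_notMem {x : V} (hSE : S ≤ E) (hxE : x ∈ E) (hxS : x ∉ S) :
    ∃ H, S ≤ H ∧ x ∉ H ∧ H ⋖ E := by
  set P := (K ∙ x) ⊔ S
  have hPE : P ≤ E := sup_le ((span_singleton_le_iff_mem x E).2 hxE) hSE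
  obtain ⟨D, hD⟩ := P.exists_isCompl
  have hHP : (S ⊔ D ⊓ E) ⊓ P = S := by
    rw [sup_inf_assoc_of_le _ le_sup_right]
    exact sup_eq_left.2
      ((inf_le_inf_right P inf_le_left).trans (hD.symm.inf_eq_bot.le.trans bot_le))
  have hxH : x ∉ S ⊔ D ⊓ E := fun hxH =>
    hxS (hHP ▸ ⟨hxH, mem_sup_left (mem_span_singleton_self x)⟩)
  refine ⟨S ⊔ D ⊓ E, le_sup_left, hxH, ?_⟩
  convert covBy_span_singleton_sup hxH using 1
  rw [← sup_assoc, ← sup_inf_assoc_of_le D hPE, hD.sup_eq_top, top_inf_eq]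

theorem adjacent_span_singleton_sup {v : V} (hH : H ⋖ E) (hv : v ∉ E) :
    Adjacent ((K ∙ v) ⊔ H) E := by
  have hHW := covBy_span_singleton_sup fun hvH => hv (hH.le hvH)
  have hWE : ((K ∙ v) ⊔ H) ⊓ E = H :=
    (hHW.eq_or_eq (le_inf le_sup_right hH.le) inf_le_left).resolve_right fun h =>
      hv ((le_inf_iff.1 h.ge).2 (mem_sup_left (mem_span_singleton_self v)))
  rw [adjacent_iff_covBy, hWE]
  exact ⟨hHW, hH⟩

end Subspaces

namespace IsDistantClique

variable {R : Set (Submodule K V)}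

theorem boxTwo_of_meetsThreeMeetsAll (hR : IsDistantClique R) (hR2 : MeetsThreeMeetsAll R) :
    BoxTwo R := by
  intro E₀ hE₀ E₁ hE₁ E₂ hE₂ h01 h02 h12 W _ hadj hW₁ hW₂ E hE
  have hmeets : ∀ {E'}, E' ∈ R → E₀ ≠ E' → ¬ Distant W E' → Meets W E' := fun hE' h0 =>
    ((hR.2 hE₀ hE' h0 : Distant _ _).not_distant_iff_meets_of_adjacent hadj).1
  obtain ⟨e₁, ⟨he₁W, he₁E₁⟩, he₁⟩ := (Submodule.ne_bot_iff _).1 (hmeets hE₁ h01 hW₁)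
  obtain ⟨e₂, ⟨he₂W, he₂E₂⟩, he₂⟩ := (Submodule.ne_bot_iff _).1 (hmeets hE₂ h02 hW₂)
  set L := (K ∙ e₁) ⊔ (K ∙ e₂)
  have hL : IsLine L := isLine_span_sup_span he₁ he₂
    ((hR.2 hE₁ hE₂ h12).disjoint.mono ((span_singleton_le_iff_mem _ _).2 he₁E₁)
      ((span_singleton_le_iff_mem _ _).2 he₂E₂))
  have hLW : L ≤ W := sup_le ((span_singleton_le_iff_mem _ _).2 he₁W)
    ((span_singleton_le_iff_mem _ _).2 he₂W)
  have hL₀ : Meets L E₀ :=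
    (hL.meets_of_le_of_covBy hLW ((adjacent_iff_covBy.1 hadj).1)).mono le_rfl inf_le_right
  have hL₁ : Meets L E₁ := meets_of_mem (mem_sup_left (mem_span_singleton_self e₁)) he₁E₁ he₁
  have hL₂ : Meets L E₂ := meets_of_mem (mem_sup_right (mem_span_singleton_self e₂)) he₂E₂ he₂
  exact ((hR2 L hL E₀ hE₀ E₁ hE₁ E₂ hE₂ h01 h02 h12 hL₀ hL₁ hL₂ E hE).mono hLW le_rfl).not_distant

theorem meetsThreeMeetsAll_of_boxTwo (hR : IsDistantClique R) (hbox : BoxTwo R) :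
    MeetsThreeMeetsAll R := by
  intro L hL E₀ hE₀ E₁ hE₁ E₂ hE₂ h01 h02 h12 hL₀ hL₁ hL₂ E hE
  obtain rfl | hE₀E := eq_or_ne E₀ E
  · exact hL₀
  have hc : IsCompl E₀ E := hR.2 hE₀ hE hE₀E
  obtain ⟨v₀, ⟨hv₀L, hv₀E₀⟩, hv₀⟩ := (Submodule.ne_bot_iff _).1 hL₀
  obtain ⟨v₁, ⟨hv₁L, hv₁E₁⟩, hv₁⟩ := (Submodule.ne_bot_iff _).1 hL₁
  have hv₁E₀ : v₁ ∉ E₀ := fun h => hv₁ ((hR.2 hE₀ hE₁ h01 : Distant _ _).eq_zero_of_mem h hv₁E₁)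
  obtain ⟨x, hxE₀, e, heE, hxe⟩ := mem_sup.1 (hc.sup_eq_top ▸ mem_top : v₁ ∈ E₀ ⊔ E)
  by_cases hx : x ∈ K ∙ v₀
  · obtain ⟨c, rfl⟩ := mem_span_singleton.1 hx
    have heL : e ∈ L := by
      rw [eq_sub_of_add_eq' hxe]
      exact sub_mem hv₁L (smul_mem _ _ hv₀L)
    refine meets_of_mem heL heE fun he => hv₁E₀ ?_
    rw [← hxe, he, add_zero]
    exact smul_mem _ _ hv₀E₀
  obtain ⟨H, hv₀H, hxH, hHE₀⟩ :=
    exists_covBy_of_notMem ((span_singleton_le_iff_mem _ _).2 hv₀E₀) hxE₀ hx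
  have hHW : H ⋖ (K ∙ v₁) ⊔ H := covBy_span_singleton_sup fun h => hv₁E₀ (hHE₀.le h)
  set W := (K ∙ v₁) ⊔ H
  have hv₁W : v₁ ∈ W := mem_sup_left (mem_span_singleton_self v₁)
  have hLW : L ≤ W := by
    have hv₀₁ : Disjoint (K ∙ v₀) (K ∙ v₁) :=
      (hR.2 hE₀ hE₁ h01).disjoint.mono ((span_singleton_le_iff_mem _ _).2 hv₀E₀)
        ((span_singleton_le_iff_mem _ _).2 hv₁E₁)
    rw [← hL.eq_of_le (isLine_span_sup_span hv₀ hv₁ hv₀₁) (sup_le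
      ((span_singleton_le_iff_mem _ _).2 hv₀L) ((span_singleton_le_iff_mem _ _).2 hv₁L))]
    exact sup_le (hv₀H.trans le_sup_right) ((span_singleton_le_iff_mem _ _).2 hv₁W)
  obtain ⟨v₂, ⟨hv₂L, hv₂E₂⟩, hv₂⟩ := (Submodule.ne_bot_iff _).1 hL₂
  have hadj : Adjacent W E₀ := adjacent_span_singleton_sup hHE₀ hv₁E₀
  have hWE : ¬ Distant W E := hbox E₀ hE₀ E₁ hE₁ E₂ hE₂ h01 h02 h12 W
    (hadj.mem_grass_iff.2 (hR.1 hE₀)) hadj (meets_of_mem hv₁W hv₁E₁ hv₁).not_distant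
    (meets_of_mem (hLW hv₂L) hv₂E₂ hv₂).not_distant E hE
  have hWle : W ≤ H ⊔ E := by
    by_contra hle
    exact hWE ((hc.isCompl_iff_not_le_sup hHE₀ hHW).2 hle)
  have hxHE : x ∈ (H ⊔ E) ⊓ E₀ := by
    refine ⟨?_, hxE₀⟩
    rw [eq_sub_of_add_eq hxe]
    exact sub_mem (hWle hv₁W) (mem_sup_right heE)
  rw [sup_inf_assoc_of_le _ hHE₀.le, inf_comm, hc.inf_eq_bot, sup_bot_eq] at hxHE
  exact absurd hxHE hxH

end IsDistantClique

theorem partialZRegulus_iff_box_general (R : Set (Submodule K V)) :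
    IsPartialZRegulus R ↔ ((IsDistantClique R ∧ HasThree R) ∧ BoxTwo R) :=
  and_congr_right fun h =>
    ⟨h.1.boxTwo_of_meetsThreeMeetsAll, h.1.meetsThreeMeetsAll_of_boxTwo⟩

/-- Core of the proof of Theorem 4.11. The partial `Z`-reguli are
precisely the subsets of `𝒢` satisfying (⊠1) and (⊠2). -/
theorem partialZRegulus_iff_box (hV : 2 < Module.rank K V)
    (R : Set (Submodule K V)) :
    IsPartialZRegulus R ↔ ((IsDistantClique R ∧ HasThree R) ∧ BoxTwo R) :=
  partialZRegulus_iff_box_general R
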